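/- Let D ⊆ {z ∈ ℂ : Im z ≥ 0} and m₁, m₂ : D → [0,∞). Then: (a) R_{m₁}(H) = R_{m₂}(H) if and only if there exist c₁, c₂ > 0 with c₁·m₂^♭(z) ≤ m₁^♭(z) ≤ c₂·m₂^♭(z) for all z with Im z ≥ 0, if and only if there exist λ₁, λ₂ > 0 with λ₁·B_{m₁}(H) ⊆ B_{m₂}(H) ⊆ λ₂·B_{m₁}(H); moreover, if R_{m₁}(H) = R_{m₂}(H) then the norms ‖·‖_{m₁} and ‖·‖_{m₂} are equivalent on this set. (b) B_{m₁}(H) = B_{m₂}(H) if and only if m₁^♭(z) = m₂^♭(z) for all z with Im z ≥ 0, if and only if R_{m₁}(H) = R_{m₂}(H) and ‖F‖_{m₁} = ‖F‖_{m₂} for all F in this set. -/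

import Mathlib

/-!
By the Baire category theorem, applied to the complete set `B_{m₁}` covered by the closed sets
`{F : |F|, |F^#| ≤ n·m₂ on D}`, an inclusion `R_{m₁} ⊆ R_{m₂}` is automatically uniform: some
multiple `l·B_{m₁}` lies in `B_{m₂}`. Such ball inclusions are equivalent, up to the constant, to
bounds `c·m₁^♭ ≤ m₂^♭` on the closed upper half-plane. Finally `‖·‖_m` is homogeneous and `B_m`
is its unit ball in `R_m`, which turns ball inclusions into norm inequalities.
-/

open Complex Filter Topology

noncomputable section

variable {H : Type*} [NormedAddCommGroup H] [InnerProductSpace ℂ H] [CompleteSpace H]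

/-- The set `R_m(H)`. -/
def RmSet (ev : H →ₗ[ℂ] (ℂ → ℂ)) (D : Set ℂ) (m : ℂ → ℝ) : Set H :=
  {F | ∃ C : ℝ, 0 ≤ C ∧ ∀ z ∈ D,
      ‖ev F z‖ ≤ C * m z ∧
      ‖(starRingEnd ℂ) (ev F ((starRingEnd ℂ) z))‖ ≤ C * m z}

/-- The norm `‖F‖_m`. -/
def mnorm (ev : H →ₗ[ℂ] (ℂ → ℂ)) (D : Set ℂ) (m : ℂ → ℝ) (F : H) : ℝ :=
  max ‖F‖ (sInf {C : ℝ | 0 ≤ C ∧ ∀ z ∈ D,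
      ‖ev F z‖ ≤ C * m z ∧
      ‖(starRingEnd ℂ) (ev F ((starRingEnd ℂ) z))‖ ≤ C * m z})

/-- The ball `B_m(H)` (for majorization on `D`). -/
def BmSet (ev : H →ₗ[ℂ] (ℂ → ℂ)) (D : Set ℂ) (m : ℂ → ℝ) : Set H :=
  {F | ‖F‖ ≤ 1 ∧ ∀ z ∈ D,
      ‖ev F z‖ ≤ m z ∧
      ‖(starRingEnd ℂ) (ev F ((starRingEnd ℂ) z))‖ ≤ m z}

/-- The sharp majorant `m^♭(z) = sup{|F(z)| : F ∈ B_m(H)}` (with `sup ∅ = 0`,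
following the convention of `Real.sSup`). -/
def mflat (ev : H →ₗ[ℂ] (ℂ → ℂ)) (D : Set ℂ) (m : ℂ → ℝ) (z : ℂ) : ℝ :=
  sSup ((fun F : H => ‖ev F z‖) '' BmSet ev D m)

open ComplexConjugate Pointwise

theorem IsClosed.exists_inter_ball_subset_of_subset_iUnion {X : Type*} [PseudoMetricSpace X]
    [CompleteSpace X] {S : Set X} (hS : IsClosed S) (hne : S.Nonempty) {E : ℕ → Set X}
    (hE : ∀ n, IsClosed (E n)) (hcover : S ⊆ ⋃ n, E n) :
    ∃ n, ∃ x ∈ S, ∃ ε > 0, S ∩ Metric.ball x ε ⊆ E n := by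
  have : CompleteSpace S := hS.completeSpace_coe
  have : Nonempty S := hne.to_subtype
  obtain ⟨n, x, hx⟩ := nonempty_interior_of_iUnion_of_closed
    (f := fun n => ((↑) : S → X) ⁻¹' E n) (fun n => (hE n).preimage continuous_subtype_val)
    (Set.eq_univ_of_forall fun y => by simpa using hcover y.2)
  obtain ⟨ε, hε, hball⟩ := Metric.isOpen_iff.1 isOpen_interior x hx
  refine ⟨n, x, x.2, ε, hε, fun y ⟨hyS, hy⟩ => ?_⟩
  exact interior_subset (s := ((↑) : S → X) ⁻¹' E n)
    (hball (show (⟨y, hyS⟩ : S) ∈ Metric.ball x ε from hy))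

theorem le_csInf_mul_of_forall_le_mul {A : Set ℝ} (hA : A.Nonempty) {x y : ℝ} (hy : 0 ≤ y)
    (h : ∀ C ∈ A, x ≤ C * y) : x ≤ sInf A * y := by
  rw [mul_comm, ← smul_eq_mul, ← Real.sInf_smul_of_nonneg hy]
  exact le_csInf (hA.smul_set) (by rintro _ ⟨C, hC, rfl⟩; simpa [mul_comm] using h C hC)

theorem exists_mul_le_and_exists_mul_le_iff {α : Type*} {p : α → Prop} {f g : α → ℝ} :
    ((∃ c, 0 < c ∧ ∀ x, p x → c * f x ≤ g x) ∧ (∃ c, 0 < c ∧ ∀ x, p x → c * g x ≤ f x)) ↔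
      ∃ c₁ c₂ : ℝ, 0 < c₁ ∧ 0 < c₂ ∧ ∀ x, p x → c₁ * g x ≤ f x ∧ f x ≤ c₂ * g x := by
  constructor
  · rintro ⟨⟨c, hc, hfg⟩, c', hc', hgf⟩
    exact ⟨c', c⁻¹, hc', inv_pos.2 hc, fun x hx => ⟨hgf x hx, (le_inv_mul_iff₀ hc).2 (hfg x hx)⟩⟩
  · rintro ⟨c₁, c₂, hc₁, hc₂, h⟩
    exact ⟨⟨c₂⁻¹, inv_pos.2 hc₂, fun x hx => (inv_mul_le_iff₀ hc₂).2 (h x hx).2⟩,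
      c₁, hc₁, fun x hx => (h x hx).1⟩

theorem exists_smul_subset_iff_exists_subset_smul {V : Type*} [MulAction ℂ V] {A B : Set V} :
    (∃ l : ℝ, 0 < l ∧ (l : ℂ) • A ⊆ B) ↔ ∃ l : ℝ, 0 < l ∧ A ⊆ (l : ℂ) • B := by
  constructor
  · rintro ⟨l, hl, h⟩
    refine ⟨l⁻¹, inv_pos.2 hl, ?_⟩
    rwa [Set.subset_smul_set_iff₀ (by exact_mod_cast (inv_pos.2 hl).ne'), ofReal_inv, inv_inv]
  · rintro ⟨l, hl, h⟩
    refine ⟨l⁻¹, inv_pos.2 hl, ?_⟩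
    rwa [ofReal_inv, ← Set.subset_smul_set_iff₀ (by exact_mod_cast hl.ne')]

section Majorization

variable {V : Type*} [AddCommGroup V] [Module ℂ V]

def MajorizedBy (ev : V →ₗ[ℂ] (ℂ → ℂ)) (D : Set ℂ) (g : ℂ → ℝ) (F : V) : Prop :=
  ∀ z ∈ D, ‖ev F z‖ ≤ g z ∧ ‖conj (ev F (conj z))‖ ≤ g z

/-- The constants admissible for `F` in the definition of `R_m(H)`; `mnorm` uses their infimum. -/
def majorantConstants (ev : V →ₗ[ℂ] (ℂ → ℂ)) (D : Set ℂ) (m : ℂ → ℝ) (F : V) : Set ℝ :=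
  {C | 0 ≤ C ∧ MajorizedBy ev D (fun z => C * m z) F}

variable {ev : V →ₗ[ℂ] (ℂ → ℂ)} {D : Set ℂ} {g g' m : ℂ → ℝ} {F G : V}

theorem majorizedBy_iff :
    MajorizedBy ev D g F ↔ ∀ z ∈ D, ‖ev F z‖ ≤ g z ∧ ‖ev F (conj z)‖ ≤ g z := by
  simp only [MajorizedBy, Complex.norm_conj]

theorem MajorizedBy.mono (hF : MajorizedBy ev D g F) (h : ∀ z ∈ D, g z ≤ g' z) :
    MajorizedBy ev D g' F :=
  fun z hz => ⟨(hF z hz).1.trans (h z hz), (hF z hz).2.trans (h z hz)⟩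

theorem MajorizedBy.add (hF : MajorizedBy ev D g F) (hG : MajorizedBy ev D g' G) :
    MajorizedBy ev D (fun z => g z + g' z) (F + G) := by
  rw [majorizedBy_iff] at *
  intro z hz
  simp only [map_add, Pi.add_apply]
  exact ⟨(norm_add_le _ _).trans (add_le_add (hF z hz).1 (hG z hz).1),
    (norm_add_le _ _).trans (add_le_add (hF z hz).2 (hG z hz).2)⟩

theorem MajorizedBy.smul (c : ℂ) (hF : MajorizedBy ev D g F) :
    MajorizedBy ev D (fun z => ‖c‖ * g z) (c • F) := by
  rw [majorizedBy_iff] at *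
  intro z hz
  simp only [map_smul, Pi.smul_apply, smul_eq_mul, norm_mul]
  exact ⟨mul_le_mul_of_nonneg_left (hF z hz).1 (norm_nonneg c),
    mul_le_mul_of_nonneg_left (hF z hz).2 (norm_nonneg c)⟩

theorem majorizedBy_smul_iff {c : ℂ} (hc : c ≠ 0) :
    MajorizedBy ev D (fun z => ‖c‖ * g z) (c • F) ↔ MajorizedBy ev D g F := by
  refine ⟨fun h => ?_, MajorizedBy.smul c⟩
  simpa [inv_smul_smul₀ hc, hc] using h.smul c⁻¹

theorem MajorizedBy.of_segment (hg : ∀ z ∈ D, 0 ≤ g z) {x : V} {t : ℝ} (ht0 : 0 < t)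
    (ht1 : t ≤ 1) (hx : MajorizedBy ev D g x)
    (hy : MajorizedBy ev D g (((1 - t : ℝ) : ℂ) • x + ((t : ℝ) : ℂ) • F)) :
    MajorizedBy ev D (fun z => 2 / t * g z) F := by
  have htF : ((t : ℝ) : ℂ) • F = (((1 - t : ℝ) : ℂ) • x + ((t : ℝ) : ℂ) • F) +
      (-((1 - t : ℝ) : ℂ)) • x := by module
  refine (majorizedBy_smul_iff (ofReal_ne_zero.2 ht0.ne')).1 ?_
  rw [htF]
  refine (hy.add (hx.smul _)).mono fun z hz => ?_
  have h2 : t * (2 / t * g z) = 2 * g z := by field_simp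
  rw [norm_neg, Complex.norm_of_nonneg (by linarith), Complex.norm_of_nonneg ht0.le, h2]
  nlinarith [hg z hz]

theorem isClosed_setOf_majorizedBy [TopologicalSpace V]
    (heval : ∀ w : ℂ, Continuous fun F : V => ev F w) (D : Set ℂ) (g : ℂ → ℝ) :
    IsClosed {F | MajorizedBy ev D g F} := by
  simp only [MajorizedBy, Set.ofPred_forall, Set.ofPred_and]
  exact isClosed_iInter fun z => isClosed_iInter fun _ =>
    (isClosed_le (heval z).norm continuous_const).inter
      (isClosed_le (Complex.continuous_conj.comp (heval _)).norm continuous_const)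

theorem majorantConstants_smul {c : ℂ} (hc : c ≠ 0) :
    majorantConstants ev D m (c • F) = ‖c‖ • majorantConstants ev D m F := by
  have hc' : 0 < ‖c‖ := norm_pos_iff.2 hc
  ext C
  rw [Set.mem_smul_set_iff_inv_smul_mem₀ hc'.ne', smul_eq_mul]
  have hCm : (fun z => C * m z) = fun z => ‖c‖ * (‖c‖⁻¹ * C * m z) := by
    funext z
    field_simp
  show (0 ≤ C ∧ MajorizedBy ev D (fun z => C * m z) (c • F)) ↔
    (0 ≤ ‖c‖⁻¹ * C ∧ MajorizedBy ev D (fun z => ‖c‖⁻¹ * C * m z) F)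
  rw [hCm, majorizedBy_smul_iff hc, mul_nonneg_iff_of_pos_left (inv_pos.2 hc')]

end Majorization

section Balls

variable {E : Type*} [NormedAddCommGroup E] [InnerProductSpace ℂ E]
  {ev : E →ₗ[ℂ] (ℂ → ℂ)} {D : Set ℂ} {m m₁ m₂ : ℂ → ℝ} {F G : E}

theorem smul_mem_rmSet (c : ℂ) (hF : F ∈ RmSet ev D m) : c • F ∈ RmSet ev D m := by
  obtain ⟨C, hC, hF⟩ := hF
  exact ⟨‖c‖ * C, by positivity, (MajorizedBy.smul c hF).mono fun z _ => (mul_assoc _ _ _).ge⟩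

theorem smul_mem_rmSet_iff {c : ℂ} (hc : c ≠ 0) : c • F ∈ RmSet ev D m ↔ F ∈ RmSet ev D m :=
  ⟨fun h => by simpa [hc] using smul_mem_rmSet c⁻¹ h, smul_mem_rmSet c⟩

theorem bmSet_subset_rmSet : BmSet ev D m ⊆ RmSet ev D m :=
  fun _ hF => ⟨1, zero_le_one, fun z hz => by simpa using hF.2 z hz⟩

theorem zero_mem_bmSet (hm : ∀ z ∈ D, 0 ≤ m z) : (0 : E) ∈ BmSet ev D m :=
  ⟨by simp, fun z hz => by simp [hm z hz]⟩

theorem isClosed_bmSet (heval : ∀ w : ℂ, Continuous fun F : E => ev F w) :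
    IsClosed (BmSet ev D m) :=
  (isClosed_le continuous_norm continuous_const).inter (isClosed_setOf_majorizedBy heval D m)

theorem smul_add_smul_mem_bmSet (hm : ∀ z ∈ D, 0 ≤ m z) (hF : F ∈ BmSet ev D m)
    (hG : G ∈ BmSet ev D m) {a b : ℂ} (hab : ‖a‖ + ‖b‖ ≤ 1) : a • F + b • G ∈ BmSet ev D m := by
  refine ⟨?_, ((MajorizedBy.smul a hF.2).add (MajorizedBy.smul b hG.2)).mono fun z hz => ?_⟩
  · calc ‖a • F + b • G‖ ≤ ‖a‖ * ‖F‖ + ‖b‖ * ‖G‖ := by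
          simpa only [norm_smul] using norm_add_le (a • F) (b • G)
      _ ≤ ‖a‖ * 1 + ‖b‖ * 1 := by gcongr; exacts [hF.1, hG.1]
      _ ≤ 1 := by simpa using hab
  · calc ‖a‖ * m z + ‖b‖ * m z = (‖a‖ + ‖b‖) * m z := by ring
      _ ≤ m z := mul_le_of_le_one_left (hm z hz) hab

theorem norm_le_mnorm : ‖F‖ ≤ mnorm ev D m F := le_max_left _ _

theorem mnorm_nonneg : 0 ≤ mnorm ev D m F := (norm_nonneg F).trans norm_le_mnorm

theorem mnorm_le {C : ℝ} (hC : 0 ≤ C) (hF : MajorizedBy ev D (fun z => C * m z) F)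
    (hn : ‖F‖ ≤ C) : mnorm ev D m F ≤ C :=
  max_le hn (csInf_le (s := majorantConstants ev D m F) ⟨0, fun _ h => h.1⟩ ⟨hC, hF⟩)

theorem mnorm_zero : mnorm ev D m (0 : E) = 0 :=
  (mnorm_le le_rfl (fun z _ => by simp) (by simp)).antisymm mnorm_nonneg

theorem mnorm_smul {c : ℂ} (hc : c ≠ 0) (F : E) : mnorm ev D m (c • F) = ‖c‖ * mnorm ev D m F := by
  show max ‖c • F‖ (sInf (majorantConstants ev D m (c • F))) =
    ‖c‖ * max ‖F‖ (sInf (majorantConstants ev D m F))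
  rw [majorantConstants_smul hc, Real.sInf_smul_of_nonneg (norm_nonneg c), norm_smul, smul_eq_mul,
    mul_max_of_nonneg _ _ (norm_nonneg c)]

theorem mnorm_ofReal_smul {r : ℝ} (hr : 0 < r) (F : E) :
    mnorm ev D m ((r : ℂ) • F) = r * mnorm ev D m F := by
  rw [mnorm_smul (ofReal_ne_zero.2 hr.ne'), Complex.norm_of_nonneg hr.le]

theorem mnorm_le_one_of_mem_bmSet (hF : F ∈ BmSet ev D m) : mnorm ev D m F ≤ 1 :=
  mnorm_le zero_le_one ((show MajorizedBy ev D m F from hF.2).mono fun _ _ => (one_mul _).ge) hF.1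

theorem mem_bmSet_of_mnorm_le_one (hm : ∀ z ∈ D, 0 ≤ m z) (hF : F ∈ RmSet ev D m)
    (h : mnorm ev D m F ≤ 1) : F ∈ BmSet ev D m := by
  have hinf : MajorizedBy ev D (fun z => sInf (majorantConstants ev D m F) * m z) F :=
    fun z hz => ⟨le_csInf_mul_of_forall_le_mul hF (hm z hz) fun C hC => (hC.2 z hz).1,
      le_csInf_mul_of_forall_le_mul hF (hm z hz) fun C hC => (hC.2 z hz).2⟩
  exact ⟨norm_le_mnorm.trans h,
    hinf.mono fun z hz => mul_le_of_le_one_left (hm z hz) ((le_max_right _ _).trans h)⟩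

theorem exists_smul_mem_bmSet (hm : ∀ z ∈ D, 0 ≤ m z) (hF : F ∈ RmSet ev D m) :
    ∃ c : ℂ, c ≠ 0 ∧ c • F ∈ BmSet ev D m := by
  have hpos : 0 < mnorm ev D m F + 1 := add_pos_of_nonneg_of_pos mnorm_nonneg one_pos
  refine ⟨_, ofReal_ne_zero.2 (inv_pos.2 hpos).ne',
    mem_bmSet_of_mnorm_le_one hm (smul_mem_rmSet _ hF) ?_⟩
  rw [mnorm_ofReal_smul (inv_pos.2 hpos), inv_mul_le_one₀ hpos]
  linarith

theorem rmSet_subset_of_smul_bmSet_subset (hm₁ : ∀ z ∈ D, 0 ≤ m₁ z) {l : ℝ} (hl : 0 < l)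
    (h : (l : ℂ) • BmSet ev D m₁ ⊆ BmSet ev D m₂) : RmSet ev D m₁ ⊆ RmSet ev D m₂ := by
  intro F hF
  obtain ⟨c, hc, hcF⟩ := exists_smul_mem_bmSet hm₁ hF
  have hl' : (l : ℂ) ≠ 0 := by exact_mod_cast hl.ne'
  rw [← smul_mem_rmSet_iff (mul_ne_zero hl' hc), mul_smul]
  exact bmSet_subset_rmSet (h (Set.smul_mem_smul_set hcF))

theorem mul_mnorm_le_of_smul_bmSet_subset (hm₁ : ∀ z ∈ D, 0 ≤ m₁ z) {l : ℝ} (hl : 0 < l)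
    (h : (l : ℂ) • BmSet ev D m₁ ⊆ BmSet ev D m₂) (hF : F ∈ RmSet ev D m₁) :
    l * mnorm ev D m₂ F ≤ mnorm ev D m₁ F := by
  rcases eq_or_ne F 0 with rfl | hF0
  · rw [mnorm_zero, mnorm_zero, mul_zero]
  have hμ : 0 < mnorm ev D m₁ F := (norm_pos_iff.2 hF0).trans_le norm_le_mnorm
  have hnormalized : (((mnorm ev D m₁ F)⁻¹ : ℝ) : ℂ) • F ∈ BmSet ev D m₁ :=
    mem_bmSet_of_mnorm_le_one hm₁ (smul_mem_rmSet _ hF)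
      (by rw [mnorm_ofReal_smul (inv_pos.2 hμ), inv_mul_cancel₀ hμ.ne'])
  have h₂ := mnorm_le_one_of_mem_bmSet (h (Set.smul_mem_smul_set hnormalized))
  rwa [smul_smul, ← ofReal_mul, ← div_eq_mul_inv, mnorm_ofReal_smul (div_pos hl hμ),
    div_mul_eq_mul_div, div_le_one hμ] at h₂

end Balls

section UniformBound

variable {E : Type*} [NormedAddCommGroup E] [InnerProductSpace ℂ E] [CompleteSpace E]
  {ev : E →ₗ[ℂ] (ℂ → ℂ)} {D : Set ℂ} {m₁ m₂ : ℂ → ℝ}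

theorem exists_majorizedBy_of_bmSet_subset_rmSet
    (heval : ∀ w : ℂ, Continuous fun F : E => ev F w) (hm₁ : ∀ z ∈ D, 0 ≤ m₁ z)
    (hm₂ : ∀ z ∈ D, 0 ≤ m₂ z) (h : BmSet ev D m₁ ⊆ RmSet ev D m₂) :
    ∃ K : ℝ, 1 ≤ K ∧ ∀ F ∈ BmSet ev D m₁, MajorizedBy ev D (fun z => K * m₂ z) F := by
  have hcover : BmSet ev D m₁ ⊆ ⋃ n : ℕ, {F | MajorizedBy ev D (fun z => n * m₂ z) F} := by
    intro F hF
    obtain ⟨C, -, hC⟩ := h hF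
    exact Set.mem_iUnion.2 ⟨⌈C⌉₊, MajorizedBy.mono hC fun z hz =>
      mul_le_mul_of_nonneg_right (Nat.le_ceil C) (hm₂ z hz)⟩
  obtain ⟨n, x, hx, ε, hε, hball⟩ :=
    (isClosed_bmSet heval).exists_inter_ball_subset_of_subset_iUnion ⟨0, zero_mem_bmSet hm₁⟩
      (fun n => isClosed_setOf_majorizedBy heval D _) hcover
  set t := min 1 (ε / 4)
  have ht0 : 0 < t := lt_min one_pos (by positivity)
  have ht1 : t ≤ 1 := min_le_left _ _
  have hn : (0 : ℝ) ≤ n := n.cast_nonneg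
  have hxn : MajorizedBy ev D (fun z => n * m₂ z) x := hball ⟨hx, Metric.mem_ball_self hε⟩
  refine ⟨2 / t * n + 1, by linarith [mul_nonneg (div_pos two_pos ht0).le hn], fun F hF => ?_⟩
  -- the point `y` of the segment from `x` to `F` is in the relative ball, hence in the `n`-th piece
  set y := ((1 - t : ℝ) : ℂ) • x + ((t : ℝ) : ℂ) • F
  have hy : y ∈ BmSet ev D m₁ := smul_add_smul_mem_bmSet hm₁ hx hF (by
    rw [Complex.norm_of_nonneg (by linarith), Complex.norm_of_nonneg ht0.le]; linarith)
  have hyx : dist y x < ε := by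
    have hsub : y - x = ((t : ℝ) : ℂ) • (F - x) := by simp only [y]; push_cast; module
    rw [dist_eq_norm, hsub, norm_smul, Complex.norm_of_nonneg ht0.le]
    calc t * ‖F - x‖ ≤ ε / 4 * 2 :=
          mul_le_mul (min_le_right _ _) ((norm_sub_le _ _).trans (by linarith [hF.1, hx.1]))
            (norm_nonneg _) (by positivity)
      _ < ε := by linarith
  have hyn : MajorizedBy ev D (fun z => n * m₂ z) y := hball ⟨hy, hyx⟩
  refine (hxn.of_segment (fun z hz => mul_nonneg hn (hm₂ z hz)) ht0 ht1 hyn).mono fun z hz => ?_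
  linarith [hm₂ z hz, show (2 / t * n + 1) * m₂ z = 2 / t * (n * m₂ z) + m₂ z by ring]

theorem rmSet_subset_iff_exists_smul_bmSet_subset
    (heval : ∀ w : ℂ, Continuous fun F : E => ev F w) (hm₁ : ∀ z ∈ D, 0 ≤ m₁ z)
    (hm₂ : ∀ z ∈ D, 0 ≤ m₂ z) :
    RmSet ev D m₁ ⊆ RmSet ev D m₂ ↔ ∃ l : ℝ, 0 < l ∧ (l : ℂ) • BmSet ev D m₁ ⊆ BmSet ev D m₂ := by
  refine ⟨fun h => ?_, fun ⟨l, hl, h⟩ => rmSet_subset_of_smul_bmSet_subset hm₁ hl h⟩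
  obtain ⟨K, hK, hKF⟩ :=
    exists_majorizedBy_of_bmSet_subset_rmSet heval hm₁ hm₂ (bmSet_subset_rmSet.trans h)
  have hK0 : 0 < K := one_pos.trans_le hK
  refine ⟨K⁻¹, inv_pos.2 hK0, ?_⟩
  rintro _ ⟨F, hF, rfl⟩
  refine ⟨?_, ((hKF F hF).smul _).mono fun z _ => ?_⟩
  · rw [norm_smul, Complex.norm_of_nonneg (inv_pos.2 hK0).le]
    exact mul_le_one₀ (inv_le_one_of_one_le₀ hK) (norm_nonneg F) hF.1
  · rw [Complex.norm_of_nonneg (inv_pos.2 hK0).le, inv_mul_cancel_left₀ hK0.ne']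

end UniformBound

section Flat

variable {E : Type*} [NormedAddCommGroup E] [InnerProductSpace ℂ E]
  {ev : E →ₗ[ℂ] (ℂ → ℂ)} {D : Set ℂ} {m m₁ m₂ : ℂ → ℝ} {F : E}

theorem bddAbove_norm_eval_image_bmSet (heval : ∀ w : ℂ, Continuous fun F : E => ev F w)
    (z : ℂ) : BddAbove ((fun F : E => ‖ev F z‖) '' BmSet ev D m) := by
  let L : E →L[ℂ] ℂ := ⟨(LinearMap.proj z).comp ev, heval z⟩
  refine ⟨‖L‖, ?_⟩
  rintro _ ⟨F, hF, rfl⟩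
  exact (L.le_opNorm F).trans (mul_le_of_le_one_right (norm_nonneg _) hF.1)

theorem norm_le_mflat (heval : ∀ w : ℂ, Continuous fun F : E => ev F w)
    (hF : F ∈ BmSet ev D m) (z : ℂ) : ‖ev F z‖ ≤ mflat ev D m z :=
  le_csSup (bddAbove_norm_eval_image_bmSet heval z) ⟨F, hF, rfl⟩

theorem mflat_nonneg (z : ℂ) : 0 ≤ mflat ev D m z :=
  Real.sSup_nonneg (by rintro _ ⟨F, -, rfl⟩; exact norm_nonneg _)

theorem mflat_le (hm : ∀ z ∈ D, 0 ≤ m z) {z : ℂ} (hz : z ∈ D) : mflat ev D m z ≤ m z :=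
  Real.sSup_le (by rintro _ ⟨F, hF, rfl⟩; exact (hF.2 z hz).1) (hm z hz)

theorem exists_sharp_mem_bmSet
    (hsharp : ∀ F : E, ∃ G : E,
      (∀ z : ℂ, ev G z = (starRingEnd ℂ) (ev F ((starRingEnd ℂ) z))) ∧ ‖G‖ = ‖F‖)
    (hF : F ∈ BmSet ev D m) : ∃ G ∈ BmSet ev D m, ∀ z, ev G z = conj (ev F (conj z)) := by
  obtain ⟨G, hG, hGn⟩ := hsharp F
  exact ⟨G, ⟨hGn ▸ hF.1, fun z hz => by simpa [hG, and_comm] using hF.2 z hz⟩, hG⟩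

theorem mul_mflat_le_of_smul_bmSet_subset (heval : ∀ w : ℂ, Continuous fun F : E => ev F w)
    (hm₁ : ∀ z ∈ D, 0 ≤ m₁ z) {l : ℝ} (hl : 0 < l)
    (h : (l : ℂ) • BmSet ev D m₁ ⊆ BmSet ev D m₂) (z : ℂ) :
    l * mflat ev D m₁ z ≤ mflat ev D m₂ z := by
  rw [← le_div_iff₀' hl]
  refine csSup_le ⟨_, 0, zero_mem_bmSet hm₁, rfl⟩ ?_
  rintro _ ⟨F, hF, rfl⟩
  rw [le_div_iff₀' hl]
  simpa [norm_smul, abs_of_pos hl] using norm_le_mflat heval (h (Set.smul_mem_smul_set hF)) z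

theorem smul_bmSet_subset_of_mul_mflat_le (heval : ∀ w : ℂ, Continuous fun F : E => ev F w)
    (hsharp : ∀ F : E, ∃ G : E,
      (∀ z : ℂ, ev G z = (starRingEnd ℂ) (ev F ((starRingEnd ℂ) z))) ∧ ‖G‖ = ‖F‖)
    (hD : D ⊆ {z : ℂ | 0 ≤ z.im}) (hm₂ : ∀ z ∈ D, 0 ≤ m₂ z) {l : ℝ} (hl0 : 0 ≤ l)
    (hl1 : l ≤ 1) (h : ∀ z : ℂ, 0 ≤ z.im → l * mflat ev D m₁ z ≤ mflat ev D m₂ z) :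
    (l : ℂ) • BmSet ev D m₁ ⊆ BmSet ev D m₂ := by
  have hbound : ∀ G ∈ BmSet ev D m₁, ∀ z ∈ D, l * ‖ev G z‖ ≤ m₂ z := fun G hG z hz =>
    calc l * ‖ev G z‖ ≤ l * mflat ev D m₁ z :=
          mul_le_mul_of_nonneg_left (norm_le_mflat heval hG z) hl0
      _ ≤ mflat ev D m₂ z := h z (hD hz)
      _ ≤ m₂ z := mflat_le hm₂ hz
  rintro _ ⟨F, hF, rfl⟩
  -- `F^#` lies in the same ball, which turns the bound at `conj z` into one at `z`
  obtain ⟨G, hG, hGF⟩ := exists_sharp_mem_bmSet hsharp hF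
  refine ⟨?_, fun z hz => ?_⟩
  · rw [norm_smul, Complex.norm_of_nonneg hl0]
    exact mul_le_one₀ hl1 (norm_nonneg F) hF.1
  · have hGz := hbound G hG z hz
    simp only [hGF, Complex.norm_conj] at hGz
    simpa [abs_of_nonneg hl0] using ⟨hbound F hF z hz, hGz⟩

theorem bmSet_subset_of_mflat_le (heval : ∀ w : ℂ, Continuous fun F : E => ev F w)
    (hsharp : ∀ F : E, ∃ G : E,
      (∀ z : ℂ, ev G z = (starRingEnd ℂ) (ev F ((starRingEnd ℂ) z))) ∧ ‖G‖ = ‖F‖)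
    (hD : D ⊆ {z : ℂ | 0 ≤ z.im}) (hm₂ : ∀ z ∈ D, 0 ≤ m₂ z)
    (h : ∀ z : ℂ, 0 ≤ z.im → mflat ev D m₁ z ≤ mflat ev D m₂ z) :
    BmSet ev D m₁ ⊆ BmSet ev D m₂ := by
  simpa using smul_bmSet_subset_of_mul_mflat_le heval hsharp hD hm₂ zero_le_one le_rfl
    (by simpa using h)

theorem exists_smul_bmSet_subset_iff (heval : ∀ w : ℂ, Continuous fun F : E => ev F w)
    (hsharp : ∀ F : E, ∃ G : E,
      (∀ z : ℂ, ev G z = (starRingEnd ℂ) (ev F ((starRingEnd ℂ) z))) ∧ ‖G‖ = ‖F‖)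
    (hD : D ⊆ {z : ℂ | 0 ≤ z.im}) (hm₁ : ∀ z ∈ D, 0 ≤ m₁ z) (hm₂ : ∀ z ∈ D, 0 ≤ m₂ z) :
    (∃ l : ℝ, 0 < l ∧ (l : ℂ) • BmSet ev D m₁ ⊆ BmSet ev D m₂) ↔
      ∃ c : ℝ, 0 < c ∧ ∀ z : ℂ, 0 ≤ z.im → c * mflat ev D m₁ z ≤ mflat ev D m₂ z := by
  refine ⟨fun ⟨l, hl, h⟩ => ⟨l, hl, fun z _ => mul_mflat_le_of_smul_bmSet_subset heval hm₁ hl h z⟩,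
    fun ⟨c, hc, h⟩ => ⟨min 1 c, lt_min one_pos hc, ?_⟩⟩
  exact smul_bmSet_subset_of_mul_mflat_le heval hsharp hD hm₂ (lt_min one_pos hc).le
    (min_le_left _ _) fun z hz =>
      (mul_le_mul_of_nonneg_right (min_le_right _ _) (mflat_nonneg z)).trans (h z hz)

end Flat

theorem bmSet_subset_iff {E : Type*} [NormedAddCommGroup E] [InnerProductSpace ℂ E]
    {ev : E →ₗ[ℂ] (ℂ → ℂ)} {D : Set ℂ} {m₁ m₂ : ℂ → ℝ}
    (hm₁ : ∀ z ∈ D, 0 ≤ m₁ z) (hm₂ : ∀ z ∈ D, 0 ≤ m₂ z) :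
    BmSet ev D m₁ ⊆ BmSet ev D m₂ ↔
      RmSet ev D m₁ ⊆ RmSet ev D m₂ ∧ ∀ F ∈ RmSet ev D m₁, mnorm ev D m₂ F ≤ mnorm ev D m₁ F := by
  refine ⟨fun h => ?_, fun ⟨hR, hn⟩ F hF => ?_⟩
  · have h' : ((1 : ℝ) : ℂ) • BmSet ev D m₁ ⊆ BmSet ev D m₂ := by simpa using h
    exact ⟨rmSet_subset_of_smul_bmSet_subset hm₁ one_pos h',
      fun F hF => by simpa using mul_mnorm_le_of_smul_bmSet_subset hm₁ one_pos h' hF⟩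
  · have hF₁ := bmSet_subset_rmSet hF
    exact mem_bmSet_of_mnorm_le_one hm₂ (hR hF₁) ((hn F hF₁).trans (mnorm_le_one_of_mem_bmSet hF))

theorem rm_eq_iff_mflat_equiv_and_bm_eq_iff_mflat_eq_general
    (ev : H →ₗ[ℂ] (ℂ → ℂ))
    (heval : ∀ w : ℂ, Continuous fun F : H => ev F w)
    (hsharp : ∀ F : H, ∃ G : H,
      (∀ z : ℂ, ev G z = (starRingEnd ℂ) (ev F ((starRingEnd ℂ) z))) ∧ ‖G‖ = ‖F‖)
    (D : Set ℂ) (hD : D ⊆ {z : ℂ | 0 ≤ z.im})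
    (m₁ m₂ : ℂ → ℝ) (hm₁ : ∀ z ∈ D, 0 ≤ m₁ z) (hm₂ : ∀ z ∈ D, 0 ≤ m₂ z) :
    -- (a)
    ((RmSet ev D m₁ = RmSet ev D m₂) ↔
      (∃ c₁ c₂ : ℝ, 0 < c₁ ∧ 0 < c₂ ∧ ∀ z : ℂ, 0 ≤ z.im →
        c₁ * mflat ev D m₂ z ≤ mflat ev D m₁ z ∧
          mflat ev D m₁ z ≤ c₂ * mflat ev D m₂ z)) ∧
    ((RmSet ev D m₁ = RmSet ev D m₂) ↔
      (∃ l₁ l₂ : ℝ, 0 < l₁ ∧ 0 < l₂ ∧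
        (fun G : H => (l₁ : ℂ) • G) '' BmSet ev D m₁ ⊆ BmSet ev D m₂ ∧
        BmSet ev D m₂ ⊆ (fun G : H => (l₂ : ℂ) • G) '' BmSet ev D m₁)) ∧
    ((RmSet ev D m₁ = RmSet ev D m₂) →
      ∃ c C : ℝ, 0 < c ∧ c ≤ C ∧ ∀ F ∈ RmSet ev D m₁,
        c * mnorm ev D m₁ F ≤ mnorm ev D m₂ F ∧
          mnorm ev D m₂ F ≤ C * mnorm ev D m₁ F) ∧
    -- (b)
    ((BmSet ev D m₁ = BmSet ev D m₂) ↔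
      (∀ z : ℂ, 0 ≤ z.im → mflat ev D m₁ z = mflat ev D m₂ z)) ∧
    ((BmSet ev D m₁ = BmSet ev D m₂) ↔
      (RmSet ev D m₁ = RmSet ev D m₂ ∧
        ∀ F ∈ RmSet ev D m₁, mnorm ev D m₁ F = mnorm ev D m₂ F)) := by
  have hR₁₂ := rmSet_subset_iff_exists_smul_bmSet_subset heval hm₁ hm₂
  have hR₂₁ := rmSet_subset_iff_exists_smul_bmSet_subset heval hm₂ hm₁
  simp only [Set.image_smul]
  refine ⟨?_, ?_, fun h => ?_, ⟨fun h z _ => by rw [mflat, mflat, h], fun h => ?_⟩, ?_⟩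
  · rw [Set.Subset.antisymm_iff, hR₁₂, hR₂₁, exists_smul_bmSet_subset_iff heval hsharp hD hm₁ hm₂,
      exists_smul_bmSet_subset_iff heval hsharp hD hm₂ hm₁]
    exact exists_mul_le_and_exists_mul_le_iff
  · rw [Set.Subset.antisymm_iff, hR₁₂, hR₂₁,
      exists_smul_subset_iff_exists_subset_smul (A := BmSet ev D m₂)]
    exact ⟨fun ⟨⟨l₁, hl₁, h₁⟩, l₂, hl₂, h₂⟩ => ⟨l₁, l₂, hl₁, hl₂, h₁, h₂⟩,
      fun ⟨l₁, l₂, hl₁, hl₂, h₁, h₂⟩ => ⟨⟨l₁, hl₁, h₁⟩, l₂, hl₂, h₂⟩⟩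
  · obtain ⟨l₁, hl₁, h₁₂⟩ := hR₁₂.1 h.subset
    obtain ⟨l₂, hl₂, h₂₁⟩ := hR₂₁.1 h.symm.subset
    refine ⟨min l₂ l₁⁻¹, l₁⁻¹, lt_min hl₂ (inv_pos.2 hl₁), min_le_right _ _, fun F hF => ⟨?_, ?_⟩⟩
    · exact (mul_le_mul_of_nonneg_right (min_le_left _ _) mnorm_nonneg).trans
        (mul_mnorm_le_of_smul_bmSet_subset hm₂ hl₂ h₂₁ (h ▸ hF))
    · exact (le_inv_mul_iff₀ hl₁).2 (mul_mnorm_le_of_smul_bmSet_subset hm₁ hl₁ h₁₂ hF)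
  · exact (bmSet_subset_of_mflat_le heval hsharp hD hm₂ fun z hz => (h z hz).le).antisymm
      (bmSet_subset_of_mflat_le heval hsharp hD hm₁ fun z hz => (h z hz).ge)
  · rw [Set.Subset.antisymm_iff, bmSet_subset_iff hm₁ hm₂, bmSet_subset_iff hm₂ hm₁]
    exact ⟨fun ⟨⟨h₁₂, hn₂⟩, h₂₁, hn₁⟩ =>
        ⟨h₁₂.antisymm h₂₁, fun F hF => (hn₁ F (h₁₂ hF)).antisymm (hn₂ F hF)⟩,
      fun ⟨hR, hn⟩ => ⟨⟨hR.subset, fun F hF => (hn F hF).ge⟩,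
        hR.symm.subset, fun F hF => (hn F (hR ▸ hF)).le⟩⟩

/-- **Statement 18.** (a) `R_{m₁}(H) = R_{m₂}(H)` iff `m₁^♭ ≍ m₂^♭`, iff
`λ₁·B_{m₁}(H) ⊆ B_{m₂}(H) ⊆ λ₂·B_{m₁}(H)` for some `λ₁, λ₂ > 0`; in that case the
norms `‖·‖_{m₁}` and `‖·‖_{m₂}` are equivalent.
(b) `B_{m₁}(H) = B_{m₂}(H)` iff `m₁^♭ = m₂^♭`, iff `R_{m₁}(H) = R_{m₂}(H)` with
`‖·‖_{m₁} = ‖·‖_{m₂}`. -/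
theorem rm_eq_iff_mflat_equiv_and_bm_eq_iff_mflat_eq
    (ev : H →ₗ[ℂ] (ℂ → ℂ)) (hinj : Function.Injective ev)
    (hentire : ∀ F : H, Differentiable ℂ (ev F))
    (heval : ∀ w : ℂ, Continuous fun F : H => ev F w)
    (hsharp : ∀ F : H, ∃ G : H,
      (∀ z : ℂ, ev G z = (starRingEnd ℂ) (ev F ((starRingEnd ℂ) z))) ∧ ‖G‖ = ‖F‖)
    (D : Set ℂ) (hD : D ⊆ {z : ℂ | 0 ≤ z.im})
    (m₁ m₂ : ℂ → ℝ) (hm₁ : ∀ z ∈ D, 0 ≤ m₁ z) (hm₂ : ∀ z ∈ D, 0 ≤ m₂ z) :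
    -- (a)
    ((RmSet ev D m₁ = RmSet ev D m₂) ↔
      (∃ c₁ c₂ : ℝ, 0 < c₁ ∧ 0 < c₂ ∧ ∀ z : ℂ, 0 ≤ z.im →
        c₁ * mflat ev D m₂ z ≤ mflat ev D m₁ z ∧
          mflat ev D m₁ z ≤ c₂ * mflat ev D m₂ z)) ∧
    ((RmSet ev D m₁ = RmSet ev D m₂) ↔
      (∃ l₁ l₂ : ℝ, 0 < l₁ ∧ 0 < l₂ ∧
        (fun G : H => (l₁ : ℂ) • G) '' BmSet ev D m₁ ⊆ BmSet ev D m₂ ∧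
        BmSet ev D m₂ ⊆ (fun G : H => (l₂ : ℂ) • G) '' BmSet ev D m₁)) ∧
    ((RmSet ev D m₁ = RmSet ev D m₂) →
      ∃ c C : ℝ, 0 < c ∧ c ≤ C ∧ ∀ F ∈ RmSet ev D m₁,
        c * mnorm ev D m₁ F ≤ mnorm ev D m₂ F ∧
          mnorm ev D m₂ F ≤ C * mnorm ev D m₁ F) ∧
    -- (b)
    ((BmSet ev D m₁ = BmSet ev D m₂) ↔
      (∀ z : ℂ, 0 ≤ z.im → mflat ev D m₁ z = mflat ev D m₂ z)) ∧
    ((BmSet ev D m₁ = BmSet ev D m₂) ↔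
      (RmSet ev D m₁ = RmSet ev D m₂ ∧
        ∀ F ∈ RmSet ev D m₁, mnorm ev D m₁ F = mnorm ev D m₂ F)) :=
  rm_eq_iff_mflat_equiv_and_bm_eq_iff_mflat_eq_general ev heval hsharp D hD m₁ m₂ hm₁ hm₂
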